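/- arXiv:2106.02947 — 8 statements merged into one kernel-verified Lean document; each statement's English description precedes it below -/
import Mathlib

section
/- Let p be a prime, k ≥ 1, m = p^k, and n ≥ m. Define v_j : {0,1}ⁿ → Z_p as the reduction mod p of the j-th elementary symmetric polynomial of the inputs. Then v_0, v_1, …, v_{m−1} are linearly independent over Z_p as elements of the function space Z_p^({0,1}ⁿ). -/
/-!
At the indicator of a set of size `s`, the `j`-th elementary symmetric polynomial takes the value
`s.choose j`. Evaluating `v_0, …, v_{m-1}` at indicators of sets of sizes `0, …, m - 1` (which exist
as `m ≤ n`) therefore gives a lower unitriangular matrix, which is invertible over any commutative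
ring.
-/

open Finset

theorem Matrix.isUnit_of_isLowerTriangular {ι R : Type*} [Fintype ι] [LinearOrder ι] [CommRing R]
    {M : Matrix ι ι R} (hM : M.IsLowerTriangular) (hdiag : ∀ i, IsUnit (M i i)) : IsUnit M := by
  classical
  rw [Matrix.isUnit_iff_isUnit_det, Matrix.det_of_isLowerTriangular M hM]
  exact IsUnit.prod_univ_iff.mpr hdiag

theorem linearIndependent_of_eval_triangular {ι X R : Type*} [Fintype ι] [LinearOrder ι]
    [CommRing R] (f : ι → X → R) (x : ι → X) (hzero : ∀ i j, i < j → f j (x i) = 0)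
    (hunit : ∀ i, IsUnit (f i (x i))) : LinearIndependent R f := by
  classical
  let M : Matrix ι ι R := Matrix.of fun i j => f j (x i)
  have hM : LinearIndependent R M.col :=
    Matrix.linearIndependent_cols_of_isUnit
      (Matrix.isUnit_of_isLowerTriangular (fun i j hij => hzero i j hij) hunit)
  exact .of_comp (LinearMap.pi fun i => LinearMap.proj (x i)) hM

theorem sum_powersetCard_prod_indicator {ι R : Type*} [Fintype ι] [CommSemiring R]
    (j : ℕ) (x : ι → Bool) :
    ∑ t ∈ powersetCard j (univ : Finset ι), ∏ i ∈ t, (if x i then (1 : R) else 0)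
      = (#{i | x i}).choose j := by
  classical
  have hprod : ∀ t : Finset ι, ∏ i ∈ t, (if x i then (1 : R) else 0)
      = if t ⊆ ({i | x i} : Finset ι) then 1 else 0 := by
    intro t
    rw [prod_boole]
    simp [subset_iff]
  simp_rw [hprod, sum_boole]
  rw [← card_powersetCard]
  congr 2
  ext t
  simp [mem_powersetCard, and_comm]

theorem stmt_4_general (p k n : ℕ) (hn : p ^ k ≤ n) :
    LinearIndependent (ZMod p)
      (fun j : Fin (p ^ k) => fun x : Fin n → Bool =>
        ∑ t ∈ Finset.powersetCard (j : ℕ) (Finset.univ : Finset (Fin n)),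
          ∏ i ∈ t, (if x i then (1 : ZMod p) else 0)) := by
  have hcard (s : Fin (p ^ k)) : #{i : Fin n | decide ((i : ℕ) < s) = true} = s := by
    simpa [Fin.card_filter_val_lt] using le_trans s.2.le hn
  refine linearIndependent_of_eval_triangular _ (fun s i => decide ((i : ℕ) < s)) ?_ ?_
  · intro s j hsj
    simp only [sum_powersetCard_prod_indicator, hcard, Nat.choose_eq_zero_of_lt hsj, Nat.cast_zero]
  · intro s
    simp only [sum_powersetCard_prod_indicator, hcard, Nat.choose_self, Nat.cast_one, isUnit_one]

/-- For prime `p`, `k ≥ 1`, `m = p^k ≤ n`, the mod-`p` reductions of the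
elementary symmetric polynomials of degrees `0, …, m−1`, viewed as functions
`{0,1}ⁿ → Z_p`, are linearly independent over `Z_p`. -/
theorem stmt_4 (p k n : ℕ) (hp : p.Prime) (hk : 1 ≤ k) (hn : p ^ k ≤ n) :
    LinearIndependent (ZMod p)
      (fun j : Fin (p ^ k) => fun x : Fin n → Bool =>
        ∑ t ∈ Finset.powersetCard (j : ℕ) (Finset.univ : Finset (Fin n)),
          ∏ i ∈ t, (if x i then (1 : ZMod p) else 0)) :=
  stmt_4_general p k n hn
end

section
/- Let p be prime, k ≥ 1, m = p^k, and n ≥ m. Every function f : {0,1}ⁿ → Z_p that is fully symmetric (invariant under permuting inputs) and m-periodic (its value on an input with i+m ones equals its value on an input with i ones, whenever both counts are at most n) lies in the Z_p-span of the functions v_0, …, v_{m−1}, the reductions mod p of the elementary symmetric polynomials of degrees 0 through m−1. -/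
/-!
A fully symmetric `f` depends only on the weight `w` of its input, `f x = F w`, and
`v_j x = (w choose j) mod p`. Periodicity lets us replace `w` by `w % m`, and on `{0, …, m - 1}`
Newton's forward-difference formula gives `F w = ∑_{j < m} (w choose j) • Δʲ F 0`. Finally
`(w % m) choose j ≡ w choose j (mod p)` for `j < m = p ^ k`, because `p` divides every
`p ^ k choose a` with `0 < a < p ^ k`.
-/

open Finset fwdDiff

theorem Nat.cast_choose_prime_pow_add {p : ℕ} (hp : p.Prime) {k i j : ℕ} (hj : j < p ^ k) :
    (((p ^ k + i).choose j : ℕ) : ZMod p) = (i.choose j : ℕ) := by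
  rw [Nat.add_choose_eq, Nat.cast_sum, Finset.sum_eq_single (0, j)]
  · simp
  · rintro ⟨a, b⟩ hab hne
    rw [HasAntidiagonal.mem_antidiagonal] at hab
    have ha₀ : a ≠ 0 := by rintro rfl; exact hne (by simp_all)
    have hp_dvd : p ∣ (p ^ k).choose a := hp.dvd_choose_pow ha₀ (by omega)
    simp [(ZMod.natCast_eq_zero_iff _ _).mpr hp_dvd]
  · simp

theorem Nat.cast_choose_mod_prime_pow {p : ℕ} (hp : p.Prime) {k j : ℕ} (hj : j < p ^ k)
    (w : ℕ) :
    ((w.choose j : ℕ) : ZMod p) = ((w % p ^ k).choose j : ℕ) := by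
  suffices ∀ r q, (((r + p ^ k * q).choose j : ℕ) : ZMod p) = (r.choose j : ℕ) by
    conv_lhs => rw [← Nat.mod_add_div w (p ^ k)]
    exact this _ _
  intro r q
  induction q with
  | zero => simp
  | succ q ih => rw [mul_add_one, ← add_assoc, add_comm, cast_choose_prime_pow_add hp hj, ih]

theorem Function.apply_mod_eq_of_periodic_le {α : Type*} {F : ℕ → α} {m n : ℕ}
    (hF : ∀ w, w + m ≤ n → F (w + m) = F w) {w : ℕ} (hw : w ≤ n) : F w = F (w % m) := by
  suffices ∀ r q, r + m * q ≤ n → F (r + m * q) = F r by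
    conv_lhs => rw [← Nat.mod_add_div w m]
    exact this _ _ (by rwa [Nat.mod_add_div])
  intro r q hq
  induction q with
  | zero => simp
  | succ q ih =>
    rw [mul_add_one, ← add_assoc] at hq ⊢
    rw [hF _ hq, ih (by omega)]

theorem eq_sum_range_choose_smul_fwdDiff_iter {M : Type*} [AddCommGroup M] (F : ℕ → M)
    {m i : ℕ} (hi : i < m) :
    F i = ∑ j ∈ range m, i.choose j • (Δ_[1])^[j] F 0 := by
  have newton := shift_eq_sum_fwdDiff_iter 1 F i 0
  rw [zero_add, smul_eq_mul, mul_one] at newton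
  rw [newton]
  refine sum_subset (range_subset_range.mpr hi) fun j _ hj => ?_
  rw [Nat.choose_eq_zero_of_lt (by simpa using hj), zero_smul]

section BoolVectors

variable {ι : Type*} [Fintype ι]

theorem sum_powersetCard_prod_ite {R : Type*} [CommSemiring R] [DecidableEq ι]
    (x : ι → Bool) (j : ℕ) :
    ∑ t ∈ powersetCard j univ, ∏ i ∈ t, (if x i then (1 : R) else 0)
      = ((#{i | x i = true}).choose j : ℕ) := by
  set S : Finset ι := {i | x i = true}
  have prod_eq (t : Finset ι) : ∏ i ∈ t, (if x i then (1 : R) else 0)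
      = if t ⊆ S then 1 else 0 := by
    rw [prod_boole]
    simp [S, subset_iff]
  have filter_eq : {t ∈ powersetCard j (univ : Finset ι) | t ⊆ S} = powersetCard j S := by
    ext t
    simp [mem_powersetCard, and_comm]
  simp_rw [prod_eq, sum_boole, filter_eq, card_powersetCard]

theorem exists_perm_comp_eq_of_card_eq {x y : ι → Bool}
    (h : #{i | y i = true} = #{i | x i = true}) : ∃ σ : Equiv.Perm ι, x ∘ σ = y := by
  classical
  have e : {i // y i = true} ≃ {i // x i = true} :=
    Fintype.equivOfCardEq (by simpa [Fintype.card_subtype] using h)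
  refine ⟨e.extendSubtype, funext fun i => ?_⟩
  by_cases hi : y i = true
  · simpa [hi] using e.extendSubtype_mem i hi
  · simpa [hi] using e.extendSubtype_not_mem i hi

end BoolVectors

theorem stmt_5_general (p k n : ℕ) (hp : p.Prime)
    (f : (Fin n → Bool) → ZMod p)
    (hsym : ∀ (σ : Equiv.Perm (Fin n)) (x : Fin n → Bool), f (x ∘ σ) = f x)
    (hper : ∀ x y : Fin n → Bool,
      (Finset.univ.filter fun i => y i = true).card
        = (Finset.univ.filter fun i => x i = true).card + p ^ k → f y = f x) :
    f ∈ Submodule.span (ZMod p)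
      (Set.range (fun j : Fin (p ^ k) => fun x : Fin n → Bool =>
        ∑ t ∈ Finset.powersetCard (j : ℕ) (Finset.univ : Finset (Fin n)),
          ∏ i ∈ t, (if x i then (1 : ZMod p) else 0))) := by
  set m := p ^ k
  let prefixOnes (w : ℕ) (i : Fin n) : Bool := decide (i.val < w)
  let F (w : ℕ) : ZMod p := f (prefixOnes w)
  have card_prefixOnes {w : ℕ} (hw : w ≤ n) : #{i | prefixOnes w i = true} = w := by
    simpa [prefixOnes, hw] using Fin.card_filter_val_lt (n := n) (m := w)
  have card_le (x : Fin n → Bool) : #{i | x i = true} ≤ n :=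
    (card_le_univ _).trans_eq (Fintype.card_fin n)
  have f_eq (x : Fin n → Bool) : f x = F #{i | x i = true} := by
    obtain ⟨σ, hσ⟩ := exists_perm_comp_eq_of_card_eq (card_prefixOnes (card_le x)).symm
    have := hsym σ (prefixOnes #{i | x i = true})
    rwa [hσ] at this
  have F_periodic (w : ℕ) (hw : w + m ≤ n) : F (w + m) = F w :=
    hper _ _ (by rw [card_prefixOnes hw, card_prefixOnes (by omega)])
  refine (Submodule.mem_span_range_iff_exists_fun _).2
    ⟨fun j => (Δ_[1])^[j] F 0, funext fun x => ?_⟩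
  rw [f_eq, Function.apply_mod_eq_of_periodic_le F_periodic (card_le x),
    eq_sum_range_choose_smul_fwdDiff_iter F (Nat.mod_lt _ (pow_pos hp.pos k)),
    ← Fin.sum_univ_eq_sum_range, Finset.sum_apply]
  refine sum_congr rfl fun j _ => ?_
  rw [Pi.smul_apply, sum_powersetCard_prod_ite, smul_eq_mul, nsmul_eq_mul,
    ← Nat.cast_choose_mod_prime_pow hp j.2, mul_comm]

/-- For prime `p`, `k ≥ 1`, `m = p^k ≤ n`: every fully symmetric, `m`-periodic
function `f : {0,1}ⁿ → Z_p` lies in the `Z_p`-span of the mod-`p` elementary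
symmetric functions of degrees `0, …, m−1`. -/
theorem stmt_5 (p k n : ℕ) (hp : p.Prime) (hk : 1 ≤ k) (hn : p ^ k ≤ n)
    (f : (Fin n → Bool) → ZMod p)
    (hsym : ∀ (σ : Equiv.Perm (Fin n)) (x : Fin n → Bool), f (x ∘ σ) = f x)
    (hper : ∀ x y : Fin n → Bool,
      (Finset.univ.filter fun i => y i = true).card
        = (Finset.univ.filter fun i => x i = true).card + p ^ k → f y = f x) :
    f ∈ Submodule.span (ZMod p)
      (Set.range (fun j : Fin (p ^ k) => fun x : Fin n → Bool =>
        ∑ t ∈ Finset.powersetCard (j : ℕ) (Finset.univ : Finset (Fin n)),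
          ∏ i ∈ t, (if x i then (1 : ZMod p) else 0))) :=
  stmt_5_general p k n hp f hsym hper
end

section
/- For every prime p and integer k ≥ 1 there is a polynomial w over Z_p in n variables of degree at most p^k − 1 such that for all x ∈ {0,1}ⁿ, w(x) = 0 if the number of zeros among x₁,…,xₙ is divisible by p^k, and w(x) = 1 otherwise. -/
/-!
Let `z` be the number of zeros of `x`. At `x` the elementary symmetric polynomial of degree `d`
in the `1 - xᵢ` takes the value `C(z, d)`, and by Lucas' theorem `C(z, pʲ) ≡ ⌊z / pʲ⌋ (mod p)`,
the `j`-th base-`p` digit of `z`. By Fermat, `1 - C(z, pʲ)^(p-1)` is the indicator of that digit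
vanishing, so the product over `j < k` is the indicator of `pᵏ ∣ z`, and its degree is at most
`∑_{j<k} (p - 1) pʲ = pᵏ - 1`.
-/

open Finset MvPolynomial

theorem Nat.pow_dvd_iff_forall_dvd_div_pow {p z : ℕ} (k : ℕ) :
    p ^ k ∣ z ↔ ∀ j < k, p ∣ z / p ^ j := by
  induction k with
  | zero => simp
  | succ k ih =>
    rw [Nat.forall_lt_succ_right, ← ih]
    constructor
    · intro h
      have hk : p ^ k ∣ z := (pow_dvd_pow p k.le_succ).trans h
      exact ⟨hk, (Nat.dvd_div_iff_mul_dvd hk).2 (by rwa [← pow_succ])⟩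
    · rintro ⟨hk, hdiv⟩
      rw [pow_succ]
      exact (Nat.dvd_div_iff_mul_dvd hk).1 hdiv

theorem Nat.sum_range_pow_mul_sub_one (p k : ℕ) : ∑ j ∈ range k, p ^ j * (p - 1) = p ^ k - 1 := by
  rcases p with _ | q
  · cases k <;> simp
  · have := geom_sum_mul_add q k
    rw [sum_mul] at this
    simp only [Nat.add_sub_cancel]
    omega

theorem ZMod.natCast_choose_prime_pow (p : ℕ) [Fact p.Prime] (z j : ℕ) :
    (z.choose (p ^ j) : ZMod p) = (z / p ^ j : ℕ) := by
  induction j generalizing z with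
  | zero => simp
  | succ j ih =>
    have hp : 1 < p := (Fact.out : p.Prime).one_lt
    have lucas := (ZMod.natCast_eq_natCast_iff _ _ _).2
      (Choose.choose_modEq_choose_mod_mul_choose_div_nat (n := z) (k := p ^ (j + 1)) (p := p))
    rw [lucas, pow_succ, Nat.mul_mod_left, Nat.mul_div_cancel _ (by omega), Nat.choose_zero_right,
      one_mul, ih, Nat.div_div_eq_div_mul, mul_comm]

theorem ZMod.one_sub_pow_card_sub_one {p : ℕ} [Fact p.Prime] (a : ZMod p) :
    1 - a ^ (p - 1) = if a = 0 then 1 else 0 := by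
  rw [ZMod.pow_card_sub_one]
  split_ifs <;> simp_all

namespace MvPolynomial

variable (σ R : Type*) [Fintype σ] [CommRing R]

noncomputable def esymmOneSub (d : ℕ) : MvPolynomial σ R :=
  ∑ S ∈ powersetCard d univ, ∏ i ∈ S, (1 - X i)

variable {σ R}

theorem totalDegree_esymmOneSub_le (d : ℕ) : (esymmOneSub σ R d).totalDegree ≤ d := by
  refine totalDegree_finsetSum_le fun S hS => (totalDegree_finsetProd _ _).trans ?_
  have h : ∀ i ∈ S, (1 - X i : MvPolynomial σ R).totalDegree ≤ 1 := fun i _ =>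
    (totalDegree_sub _ _).trans <| max_le (by simp) ((totalDegree_monomial_le _ _).trans (by simp))
  calc ∑ i ∈ S, (1 - X i : MvPolynomial σ R).totalDegree ≤ ∑ _i ∈ S, 1 := sum_le_sum h
    _ = d := by simpa using (mem_powersetCard.1 hS).2

theorem eval_esymmOneSub (d : ℕ) (x : σ → Bool) :
    eval (fun i => if x i then (1 : R) else 0) (esymmOneSub σ R d) =
      (#(univ.filter fun i => x i = false)).choose d := by
  have eval_one_sub_X : ∀ i, eval (fun i => if x i then (1 : R) else 0) (1 - X i) =
      if x i = false then 1 else 0 := fun i => by cases hx : x i <;> simp [hx]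
  simp only [esymmOneSub, map_sum, map_prod, eval_one_sub_X, prod_boole, sum_boole]
  rw [← card_powersetCard, powersetCard_eq_filter, powersetCard_eq_filter]
  congr 2
  ext S
  simp [subset_iff, and_comm]

variable (σ) in
noncomputable def zeroCountNotDvd (p k : ℕ) : MvPolynomial σ (ZMod p) :=
  1 - ∏ j ∈ range k, (1 - esymmOneSub σ (ZMod p) (p ^ j) ^ (p - 1))

theorem totalDegree_zeroCountNotDvd_le (p k : ℕ) :
    (zeroCountNotDvd σ p k).totalDegree ≤ p ^ k - 1 := by
  have one_sub_le : ∀ {m : ℕ} (f : MvPolynomial σ (ZMod p)), f.totalDegree ≤ m →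
      (1 - f).totalDegree ≤ m := fun f hf =>
    (totalDegree_sub _ _).trans (max_le (by simp) hf)
  refine one_sub_le _ <| (totalDegree_finsetProd _ _).trans ?_
  rw [← Nat.sum_range_pow_mul_sub_one]
  refine sum_le_sum fun j _ => one_sub_le _ <| (totalDegree_pow _ _).trans ?_
  rw [mul_comm]
  exact Nat.mul_le_mul_right _ (totalDegree_esymmOneSub_le _)

theorem eval_zeroCountNotDvd (p k : ℕ) [Fact p.Prime] (x : σ → Bool) :
    eval (fun i => if x i then (1 : ZMod p) else 0) (zeroCountNotDvd σ p k) =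
      if p ^ k ∣ #(univ.filter fun i => x i = false) then 0 else 1 := by
  set z := #(univ.filter fun i => x i = false)
  have digit_test : ∀ j, eval (fun i => if x i then (1 : ZMod p) else 0)
      (1 - esymmOneSub σ (ZMod p) (p ^ j) ^ (p - 1)) = if p ∣ z / p ^ j then 1 else 0 := by
    intro j
    rw [map_sub, map_one, map_pow, eval_esymmOneSub, ZMod.natCast_choose_prime_pow,
      ZMod.one_sub_pow_card_sub_one]
    exact if_congr (ZMod.natCast_eq_zero_iff _ _) rfl rfl
  simp only [zeroCountNotDvd, map_sub, map_one, map_prod, digit_test, prod_boole, mem_range,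
    ← Nat.pow_dvd_iff_forall_dvd_div_pow]
  split_ifs <;> simp

end MvPolynomial

theorem stmt_6_general (p k n : ℕ) (hp : p.Prime) :
    ∃ w : MvPolynomial (Fin n) (ZMod p),
      w.totalDegree ≤ p ^ k - 1 ∧
      ∀ x : Fin n → Bool,
        MvPolynomial.eval (fun i => if x i then (1 : ZMod p) else 0) w =
          (if p ^ k ∣ (Finset.univ.filter fun i => x i = false).card then 0 else 1) := by
  have : Fact p.Prime := ⟨hp⟩
  exact ⟨zeroCountNotDvd (Fin n) p k, totalDegree_zeroCountNotDvd_le p k,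
    eval_zeroCountNotDvd p k⟩

/-- For every prime `p` and `k ≥ 1` there is an `n`-variable polynomial `w`
over `Z_p` of total degree at most `p^k − 1` such that on boolean inputs,
`w(x) = 0` iff the number of zeros among the inputs is divisible by `p^k`,
and `w(x) = 1` otherwise. -/
theorem stmt_6 (p k n : ℕ) (hp : p.Prime) (hk : 1 ≤ k) :
    ∃ w : MvPolynomial (Fin n) (ZMod p),
      w.totalDegree ≤ p ^ k - 1 ∧
      ∀ x : Fin n → Bool,
        MvPolynomial.eval (fun i => if x i then (1 : ZMod p) else 0) w =
          (if p ^ k ∣ (Finset.univ.filter fun i => x i = false).card then 0 else 1) :=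
  stmt_6_general p k n hp
end

section
/- Let f : {0,1}ⁿ → {0,1} be nonconstant, and let S(f) be the smaller of the two preimages f⁻¹(0), f⁻¹(1). Then by fixing at most log₂|S(f)| variables of f to constants in {0,1}, one obtains a nonconstant function g on the remaining variables whose smaller preimage has exactly one element (i.e., g is a spike). -/
/-!
Induct on the size `m` of the smaller pile. If `m ≥ 2`, two distinct points of the smaller pile
differ in some free coordinate `i`. Fixing `x_i` splits the subcube into two halves of equal size,
each of size at least `m`, and splits the smaller pile into two nonempty parts; on the half
receiving the smaller part, of size `k ≤ m / 2`, that part is still the smaller pile. So one fixed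
variable at least halves `|S|`, and `|S|` reaches `1` after at most `log₂ m` steps.
-/

/-- The subdomain of `{0,1}ⁿ` obtained by fixing the variables in `I` to the
constants prescribed by `c`. -/
def restrDom (n : ℕ) (I : Finset (Fin n)) (c : Fin n → Bool) :
    Finset (Fin n → Bool) :=
  Finset.univ.filter (fun x => ∀ i ∈ I, x i = c i)

open Finset Function

theorem Bool.eq_or_eq_of_ne {a a' : Bool} (h : a ≠ a') (b : Bool) : a = b ∨ a' = b := by
  revert h; cases a <;> cases a' <;> cases b <;> decide

section Piles

variable {α : Type*} (s : Finset α) (g : α → Bool)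

def smallerPileCard : ℕ := min #{x ∈ s | g x = false} #{x ∈ s | g x = true}

theorem card_filter_eq_add_card_filter_eq_not (b : Bool) :
    #{x ∈ s | g x = b} + #{x ∈ s | g x = !b} = #s := by
  simpa only [Bool.eq_not] using card_filter_add_card_filter_not (s := s) (fun x => g x = b)

theorem smallerPileCard_le (b : Bool) : smallerPileCard s g ≤ #{x ∈ s | g x = b} := by
  cases b
  · exact min_le_left _ _
  · exact min_le_right _ _

theorem exists_card_filter_eq_smallerPileCard : ∃ b, #{x ∈ s | g x = b} = smallerPileCard s g :=
  (min_choice _ _).elim (fun h => ⟨false, h.symm⟩) (fun h => ⟨true, h.symm⟩)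

theorem lt_smallerPileCard_iff {k : ℕ} :
    k < smallerPileCard s g ↔ ∀ b, k < #{x ∈ s | g x = b} := by
  simp only [smallerPileCard, lt_min_iff, Bool.forall_bool]

theorem smallerPileCard_pos_iff :
    0 < smallerPileCard s g ↔ ∀ b, ∃ x ∈ s, g x = b := by
  simp only [lt_smallerPileCard_iff, card_pos, filter_nonempty_iff]

theorem two_mul_smallerPileCard_le_card : 2 * smallerPileCard s g ≤ #s := by
  have hsum := card_filter_eq_add_card_filter_eq_not s g false
  rw [Bool.not_false] at hsum
  have := smallerPileCard_le s g false
  have := smallerPileCard_le s g true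
  omega

end Piles

section Subcubes

variable {n : ℕ} {I : Finset (Fin n)} {c : Fin n → Bool} {x : Fin n → Bool}

theorem mem_restrDom : x ∈ restrDom n I c ↔ ∀ i ∈ I, x i = c i := by
  simp [restrDom]

@[simp]
theorem restrDom_empty (c : Fin n → Bool) : restrDom n ∅ c = univ := by
  ext x
  simp [mem_restrDom]

theorem restrDom_insert_update {i : Fin n} (hi : i ∉ I) (b : Bool) :
    restrDom n (insert i I) (update c i b) = {x ∈ restrDom n I c | x i = b} := by
  ext x
  simp only [mem_restrDom, mem_filter, forall_mem_insert, update_self]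
  constructor
  · rintro ⟨hxi, hx⟩
    exact ⟨fun j hj => (hx j hj).trans (update_of_ne (ne_of_mem_of_not_mem hj hi) _ _), hxi⟩
  · rintro ⟨hx, hxi⟩
    exact ⟨hxi, fun j hj => (hx j hj).trans (update_of_ne (ne_of_mem_of_not_mem hj hi) _ _).symm⟩

theorem card_restrDom_congr (I : Finset (Fin n)) (c c' : Fin n → Bool) :
    #(restrDom n I c) = #(restrDom n I c') := by
  have maps (d d' : Fin n → Bool) :
      Set.MapsTo (I.piecewise d' ·) (restrDom n I d) (restrDom n I d') :=
    fun _ _ => mem_restrDom.mpr fun _ hj => piecewise_eq_of_mem _ _ _ hj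
  have inv (d d' : Fin n → Bool) :
      Set.LeftInvOn (I.piecewise d ·) (I.piecewise d' ·) (restrDom n I d) := fun x hx => by
    dsimp only
    rw [piecewise_idem_right, ← I.piecewise_congr (mem_restrDom.mp hx) fun _ _ => rfl,
      piecewise_same]
  exact card_nbij' _ _ (maps c c') (maps c' c) (inv c c') (inv c' c)

end Subcubes

variable {n : ℕ} (f : (Fin n → Bool) → Bool)

theorem exists_restrDom_insert_smallerPileCard_le_half {I : Finset (Fin n)} {c : Fin n → Bool}
    (hm : 2 ≤ smallerPileCard (restrDom n I c) f) :
    ∃ i ∉ I, ∃ e, 0 < smallerPileCard (restrDom n (insert i I) (update c i e)) f ∧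
      2 * smallerPileCard (restrDom n (insert i I) (update c i e)) f ≤
        smallerPileCard (restrDom n I c) f := by
  set D := restrDom n I c
  set m := smallerPileCard D f
  obtain ⟨b, hb⟩ := exists_card_filter_eq_smallerPileCard D f
  set P := {z ∈ D | f z = b}
  obtain ⟨x, hx, y, hy, hxy⟩ := one_lt_card.mp (hb ▸ hm : 1 < #P)
  obtain ⟨i, hxyi⟩ := Function.ne_iff.mp hxy
  have hi : i ∉ I := fun hi => hxyi <| (mem_restrDom.mp (mem_filter.mp hx).1 i hi).trans
    (mem_restrDom.mp (mem_filter.mp hy).1 i hi).symm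
  have hq_pos (e : Bool) : 0 < #{z ∈ P | z i = e} :=
    card_pos.mpr <| filter_nonempty_iff.mpr <|
      (Bool.eq_or_eq_of_ne hxyi e).elim (⟨x, hx, ·⟩) (⟨y, hy, ·⟩)
  obtain ⟨e, he⟩ := exists_card_filter_eq_smallerPileCard P (· i)
  have hq_le : #{z ∈ P | z i = e} ≤ #{z ∈ P | z i = !e} := he ▸ smallerPileCard_le P (· i) (!e)
  have hq_sum : #{z ∈ P | z i = e} + #{z ∈ P | z i = !e} = m :=
    (card_filter_eq_add_card_filter_eq_not P (· i) e).trans hb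
  refine ⟨i, hi, e, ?_⟩
  have hH_card : m ≤ #(restrDom n (insert i I) (update c i e)) := by
    have hsplit : #(restrDom n (insert i I) (update c i e)) +
        #(restrDom n (insert i I) (update c i !e)) = #D := by
      rw [restrDom_insert_update hi, restrDom_insert_update hi]
      exact card_filter_eq_add_card_filter_eq_not D (· i) e
    have := card_restrDom_congr (insert i I) (update c i e) (update c i !e)
    have := two_mul_smallerPileCard_le_card D f
    omega
  have hH_pile : #{z ∈ restrDom n (insert i I) (update c i e) | f z = b} = #{z ∈ P | z i = e} := by
    rw [restrDom_insert_update hi e, filter_comm]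
  generalize restrDom n (insert i I) (update c i e) = H at hH_card hH_pile ⊢
  have hH_split := card_filter_eq_add_card_filter_eq_not H f b
  refine ⟨(lt_smallerPileCard_iff H f).mpr fun b' => ?_, ?_⟩
  · have := hq_pos e
    rcases Bool.eq_or_eq_not b' b with rfl | rfl <;> omega
  · have := smallerPileCard_le H f b
    omega

theorem exists_restrDom_smallerPileCard_eq_one {I : Finset (Fin n)} {c : Fin n → Bool}
    (hpos : 0 < smallerPileCard (restrDom n I c) f) :
    ∃ (I' : Finset (Fin n)) (c' : Fin n → Bool),
      #I' ≤ #I + Nat.log 2 (smallerPileCard (restrDom n I c) f) ∧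
        smallerPileCard (restrDom n I' c') f = 1 := by
  induction hm : smallerPileCard (restrDom n I c) f using Nat.strong_induction_on
    generalizing I c with
  | _ m ih =>
  rcases Nat.lt_or_ge m 2 with hm2 | hm2
  · exact ⟨I, c, by omega, by omega⟩
  obtain ⟨i, hi, e, hpos', hhalf⟩ :=
    exists_restrDom_insert_smallerPileCard_le_half f (hm ▸ hm2)
  obtain ⟨I', c', hI', hspike⟩ := ih _ (by omega) hpos' rfl
  refine ⟨I', c', hI'.trans ?_, hspike⟩
  have hlog := Nat.log_mono_right (b := 2) (hm ▸ hhalf)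
  rw [mul_comm, Nat.log_mul_base one_lt_two hpos'.ne'] at hlog
  rw [card_insert_of_notMem hi]
  omega

/-- A nonconstant boolean function `f` can be turned into a spike (a nonconstant
function whose smaller pile is a singleton) by fixing at most `log₂ |S(f)|`
variables to constants, where `S(f)` is the smaller pile of `f`. -/
theorem stmt_7 (n : ℕ) (f : (Fin n → Bool) → Bool) (hf : ∃ x y, f x ≠ f y) :
    ∃ (I : Finset (Fin n)) (c : Fin n → Bool),
      I.card ≤ Nat.log 2
        (min (Finset.univ.filter fun x : Fin n → Bool => f x = false).card
             (Finset.univ.filter fun x : Fin n → Bool => f x = true).card) ∧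
      (∃ x ∈ restrDom n I c, f x = true) ∧ (∃ x ∈ restrDom n I c, f x = false) ∧
      min ((restrDom n I c).filter fun x => f x = false).card
          ((restrDom n I c).filter fun x => f x = true).card = 1 := by
  have hpos : 0 < smallerPileCard (restrDom n ∅ (fun _ => false)) f := by
    obtain ⟨x, y, hxy⟩ := hf
    refine (smallerPileCard_pos_iff _ f).mpr fun b => ?_
    simpa using (Bool.eq_or_eq_of_ne hxy b).elim (⟨x, ·⟩) (⟨y, ·⟩)
  obtain ⟨I, c, hI, hspike⟩ := exists_restrDom_smallerPileCard_eq_one f hpos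
  have hboth := (smallerPileCard_pos_iff _ f).mp (hspike ▸ Nat.one_pos)
  refine ⟨I, c, by simpa [smallerPileCard] using hI, hboth true, hboth false, hspike⟩
end

section
/- For any nonconstant boolean function f : {0,1}ⁿ → {0,1} with smaller pile S(f) of size ≥ 2, there exist an index i and a constant c ∈ {0,1} such that the restriction f|_{x_i=c} is nonconstant and the size of its smaller pile is at most |S(f)|/2. -/
/-!
Let `S` be the smaller pile, say `S = f⁻¹(b)`. Two distinct points of `S` differ in some
coordinate `i`, so both halves `x i = c` of the cube meet `S`. Taking `c` with the smaller share
`S ∩ {x i = c}` halves `S`; and since the two halves have the same size, that half also carries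
at least its share of the nonempty other pile, so the restriction stays nonconstant.
-/

def fixVar (n : ℕ) (i : Fin n) (c : Bool) : Finset (Fin n → Bool) :=
  Finset.univ.filter (fun x => x i = c)

open Finset

section FixVar

variable {n : ℕ} (i : Fin n)

lemma card_filter_fixVar_add (c : Bool) (p : (Fin n → Bool) → Prop) [DecidablePred p] :
    #((fixVar n i c).filter p) + #((fixVar n i (!c)).filter p) = #(univ.filter p) := by
  suffices #((fixVar n i false).filter p) + #((fixVar n i true).filter p) = #(univ.filter p) by
    cases c
    · exact this
    · rwa [add_comm]
  rw [← card_filter_add_card_filter_not (s := univ.filter p) (p := fun x => x i = false)]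
  congr 2 <;> ext x <;> simp [fixVar, and_comm]

lemma card_fixVar_not (c : Bool) : #(fixVar n i (!c)) = #(fixVar n i c) := by
  let flip : (Fin n → Bool) → (Fin n → Bool) := fun x => Function.update x i (!x i)
  refine card_nbij' flip flip ?_ ?_ ?_ ?_ <;> intro x hx <;> simp_all [flip, fixVar]

lemma exists_forall_fixVar_of_ne {p : (Fin n → Bool) → Prop} {a₀ a₁ : Fin n → Bool}
    (h₀ : p a₀) (h₁ : p a₁) (hne : a₀ ≠ a₁) : ∃ i, ∀ c, ∃ x ∈ fixVar n i c, p x := by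
  obtain ⟨i, hi⟩ := Function.ne_iff.mp hne
  refine ⟨i, fun c => ?_⟩
  by_cases h : a₀ i = c
  · exact ⟨a₀, by simp [fixVar, h], h₀⟩
  · refine ⟨a₁, ?_, h₁⟩
    simp only [fixVar, mem_filter, mem_univ, true_and]
    revert h hi
    cases a₀ i <;> cases a₁ i <;> cases c <;> simp

lemma exists_mem_fixVar_not_of_card_le (c : Bool) (p : (Fin n → Bool) → Prop) [DecidablePred p]
    (hle : #((fixVar n i c).filter p) ≤ #((fixVar n i (!c)).filter p)) (hq : ∃ x, ¬ p x) :
    ∃ x ∈ fixVar n i c, ¬ p x := by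
  have hsplit := card_filter_fixVar_add i c (fun x => ¬ p x)
  have hc := card_filter_add_card_filter_not (s := fixVar n i c) p
  have hnc := card_filter_add_card_filter_not (s := fixVar n i (!c)) p
  have hhalf := card_fixVar_not i c
  have hpos : 0 < #(univ.filter fun x => ¬ p x) := by
    obtain ⟨x, hx⟩ := hq
    exact card_pos.mpr ⟨x, by simpa using hx⟩
  exact filter_nonempty_iff.mp (card_pos.mp (by omega))

lemma exists_fixVar_halving (p : (Fin n → Bool) → Prop) [DecidablePred p]
    (h2 : 2 ≤ #(univ.filter p)) (hq : ∃ x, ¬ p x) :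
    ∃ i c, (∃ x ∈ fixVar n i c, p x) ∧ (∃ x ∈ fixVar n i c, ¬ p x) ∧
      2 * #((fixVar n i c).filter p) ≤ #(univ.filter p) := by
  obtain ⟨a₀, ha₀, a₁, ha₁, hne⟩ := one_lt_card.mp h2
  obtain ⟨i, hmeet⟩ := exists_forall_fixVar_of_ne (mem_filter.mp ha₀).2 (mem_filter.mp ha₁).2 hne
  obtain ⟨c, hc⟩ : ∃ c, #((fixVar n i c).filter p) ≤ #((fixVar n i (!c)).filter p) :=
    (le_total _ _).elim (fun h => ⟨false, h⟩) (fun h => ⟨true, h⟩)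
  refine ⟨i, c, hmeet c, exists_mem_fixVar_not_of_card_le i c p hc hq, ?_⟩
  have := card_filter_fixVar_add i c p
  omega

end FixVar

theorem stmt_8_general (n : ℕ) (f : (Fin n → Bool) → Bool)
    (h2 : 2 ≤ min (Finset.univ.filter fun x : Fin n → Bool => f x = false).card
                  (Finset.univ.filter fun x : Fin n → Bool => f x = true).card) :
    ∃ (i : Fin n) (c : Bool),
      (∃ x ∈ fixVar n i c, f x = true) ∧ (∃ x ∈ fixVar n i c, f x = false) ∧
      2 * min ((fixVar n i c).filter fun x => f x = false).card
              ((fixVar n i c).filter fun x => f x = true).card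
        ≤ min (Finset.univ.filter fun x : Fin n → Bool => f x = false).card
              (Finset.univ.filter fun x : Fin n → Bool => f x = true).card := by
  have hF : 2 ≤ #(univ.filter fun x => f x = false) := h2.trans (min_le_left _ _)
  have hT : 2 ≤ #(univ.filter fun x => f x = true) := h2.trans (min_le_right _ _)
  have other_pile_nonempty {b : Bool} (h : 2 ≤ #(univ.filter fun x => f x = b)) :
      ∃ x, ¬ f x = !b := by
    obtain ⟨x, hx⟩ := card_pos.mp (by omega : 0 < #(univ.filter fun x => f x = b))
    exact ⟨x, by simp [(mem_filter.mp hx).2]⟩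
  rcases le_total #(univ.filter fun x => f x = false) #(univ.filter fun x => f x = true) with h | h
  · obtain ⟨i, c, hfalse, htrue, hhalf⟩ :=
      exists_fixVar_halving (fun x => f x = false) hF (other_pile_nonempty hT)
    refine ⟨i, c, by simpa using htrue, hfalse, ?_⟩
    rw [min_eq_left h]
    exact (Nat.mul_le_mul_left 2 (min_le_left _ _)).trans hhalf
  · obtain ⟨i, c, htrue, hfalse, hhalf⟩ :=
      exists_fixVar_halving (fun x => f x = true) hT (other_pile_nonempty hF)
    refine ⟨i, c, htrue, by simpa using hfalse, ?_⟩
    rw [min_eq_right h]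
    exact (Nat.mul_le_mul_left 2 (min_le_right _ _)).trans hhalf

/-- For a nonconstant boolean function `f` with smaller pile of size `≥ 2`,
one can fix a single variable to a constant so that the restriction is still
nonconstant and its smaller pile has at most half the size. -/
theorem stmt_8 (n : ℕ) (f : (Fin n → Bool) → Bool) (hf : ∃ x y, f x ≠ f y)
    (h2 : 2 ≤ min (Finset.univ.filter fun x : Fin n → Bool => f x = false).card
                  (Finset.univ.filter fun x : Fin n → Bool => f x = true).card) :
    ∃ (i : Fin n) (c : Bool),
      (∃ x ∈ fixVar n i c, f x = true) ∧ (∃ x ∈ fixVar n i c, f x = false) ∧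
      2 * min ((fixVar n i c).filter fun x => f x = false).card
              ((fixVar n i c).filter fun x => f x = true).card
        ≤ min (Finset.univ.filter fun x : Fin n → Bool => f x = false).card
              (Finset.univ.filter fun x : Fin n → Bool => f x = true).card :=
  stmt_8_general n f h2
end

section
/- Let m have prime factorization p₁^{α₁}⋯p_ω^{α_ω} with ω ≥ 2 distinct primes, and suppose nonnegative integers ν₁,…,ν_ω satisfy p₁^{ν₁}⋯p_ω^{ν_ω} > ℓ. If an integer ℓ₀ satisfies 1 ≤ ℓ₀ ≤ ℓ, then there exists an index j such that pⱼ^{νⱼ} does not divide ℓ₀. Consequently, if t_j(a) ∈ {0,1} equals 0 iff pⱼ^{νⱼ} divides ℓ₀, then Σⱼ (m/pⱼ)·t_j(a) ≡ 0 (mod m) iff ℓ₀ = 0 for integers 0 ≤ ℓ₀ ≤ ℓ. -/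
/-! Modulo `pⱼ^αⱼ` every term `(m/pᵢ)·tᵢ` with `i ≠ j` vanishes, while `m/pⱼ` is `pⱼ^(αⱼ-1)`
times a number prime to `pⱼ`; hence `m ∣ Σᵢ (m/pᵢ)·tᵢ` iff `pⱼ ∣ tⱼ` for every `j`. If
`0 < ℓ₀ ≤ ℓ < ∏ pⱼ^νⱼ`, coprimality of the prime powers forces some `pⱼ^νⱼ ∤ ℓ₀`, so `tⱼ = 1`
and the sum is nonzero in `ℤ/m`. -/

open Finset Function

variable {ι : Type*} {p : ι → ℕ}

theorem pairwise_isRelPrime_prime_pow (hp : ∀ j, (p j).Prime) (hpinj : Injective p)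
    (ν : ι → ℕ) : Pairwise (IsRelPrime on fun j ↦ p j ^ ν j) := fun i j hij ↦
  Nat.coprime_iff_isRelPrime.mp (Nat.coprime_pow_primes _ _ (hp i) (hp j) (hpinj.ne hij))

variable [Fintype ι]

theorem prod_prime_pow_dvd_iff (hp : ∀ j, (p j).Prime) (hpinj : Injective p)
    {ν : ι → ℕ} {n : ℕ} : (∏ j, p j ^ ν j) ∣ n ↔ ∀ j, p j ^ ν j ∣ n :=
  ⟨fun h j ↦ (dvd_prod_of_mem _ (mem_univ j)).trans h,
    Fintype.prod_dvd_of_isRelPrime (pairwise_isRelPrime_prime_pow hp hpinj ν)⟩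

theorem exists_not_prime_pow_dvd_of_lt_prod (hp : ∀ j, (p j).Prime)
    (hpinj : Injective p) {ν : ι → ℕ} {n : ℕ} (hn0 : 0 < n)
    (hn : n < ∏ j, p j ^ ν j) : ∃ j, ¬ p j ^ ν j ∣ n := by
  by_contra! h
  exact (Nat.le_of_dvd hn0 ((prod_prime_pow_dvd_iff hp hpinj).2 h)).not_gt hn

theorem prod_pow_div_eq [DecidableEq ι] {α : ι → ℕ} {i : ι} (hpi : 0 < p i) (hαi : 1 ≤ α i) :
    (∏ k, p k ^ α k) / p i = p i ^ (α i - 1) * ∏ k ∈ univ.erase i, p k ^ α k := by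
  rw [← mul_prod_erase _ _ (mem_univ i), ← Nat.sub_add_cancel hαi, pow_succ,
    Nat.add_sub_cancel, mul_right_comm, Nat.mul_div_cancel _ hpi]

theorem coprime_prod_erase_prime_pow [DecidableEq ι] (hp : ∀ j, (p j).Prime)
    (hpinj : Injective p) (α : ι → ℕ) (j : ι) :
    (p j).Coprime (∏ k ∈ univ.erase j, p k ^ α k) :=
  Nat.Coprime.prod_right fun k hk ↦
    ((Nat.coprime_primes (hp j) (hp k)).2 (hpinj.ne (ne_of_mem_erase hk).symm)).pow_right _

theorem pow_dvd_prod_pow_div_of_ne {α : ι → ℕ} {i j : ι} (hpi : 0 < p i) (hαi : 1 ≤ α i)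
    (hij : i ≠ j) : p j ^ α j ∣ (∏ k, p k ^ α k) / p i := by
  classical
  rw [prod_pow_div_eq hpi hαi]
  exact (dvd_prod_of_mem _ (mem_erase.2 ⟨hij.symm, mem_univ j⟩)).mul_left _

theorem prime_pow_dvd_sum_div_mul_iff (hp : ∀ j, (p j).Prime) (hpinj : Injective p)
    {α : ι → ℕ} (hα : ∀ j, 1 ≤ α j) (t : ι → ℕ) (j : ι) :
    p j ^ α j ∣ ∑ i, (∏ k, p k ^ α k) / p i * t i ↔ p j ∣ t j := by
  classical
  have hpos : ∀ k, 0 < p k := fun k ↦ (hp k).pos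
  have hrest : p j ^ α j ∣ ∑ i ∈ univ.erase j, (∏ k, p k ^ α k) / p i * t i :=
    dvd_sum fun i hi ↦ (pow_dvd_prod_pow_div_of_ne (hpos i) (hα i) (ne_of_mem_erase hi)).mul_right _
  rw [← add_sum_erase _ _ (mem_univ j), Nat.dvd_add_left hrest, prod_pow_div_eq (hpos j) (hα j),
    ← Nat.sub_add_cancel (hα j), pow_succ, Nat.add_sub_cancel, mul_assoc,
    Nat.mul_dvd_mul_iff_left (pow_pos (hpos j) _)]
  exact (coprime_prod_erase_prime_pow hp hpinj α j).dvd_mul_left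

/-- Injectivity of `⊕ⱼ ℤ/pⱼ → ℤ/m`, `(tⱼ) ↦ Σⱼ (m/pⱼ)·tⱼ`. -/
theorem prod_dvd_sum_div_mul_iff (hp : ∀ j, (p j).Prime) (hpinj : Injective p)
    {α : ι → ℕ} (hα : ∀ j, 1 ≤ α j) (t : ι → ℕ) :
    (∏ k, p k ^ α k) ∣ ∑ i, (∏ k, p k ^ α k) / p i * t i ↔ ∀ j, p j ∣ t j := by
  rw [prod_prime_pow_dvd_iff hp hpinj]
  exact forall_congr' (prime_pow_dvd_sum_div_mul_iff hp hpinj hα t)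

theorem stmt_12_general (ω : ℕ) (p α ν : Fin ω → ℕ)
    (hp : ∀ j, (p j).Prime) (hpinj : Function.Injective p)
    (hα : ∀ j, 1 ≤ α j) (m : ℕ) (hm : m = ∏ j, p j ^ α j)
    (ℓ : ℕ) (hℓ : ℓ < ∏ j, p j ^ ν j) :
    (∀ ℓ₀ : ℕ, 1 ≤ ℓ₀ → ℓ₀ ≤ ℓ → ∃ j, ¬ (p j ^ ν j ∣ ℓ₀)) ∧
    (∀ ℓ₀ : ℕ, ℓ₀ ≤ ℓ → ∀ t : Fin ω → ℕ, (∀ j, t j ≤ 1) →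
      (∀ j, t j = 0 ↔ p j ^ ν j ∣ ℓ₀) →
      (((∑ j, (m / p j) * t j : ℕ) : ZMod m) = 0 ↔ ℓ₀ = 0)) := by
  have hnot_dvd : ∀ ℓ₀ : ℕ, 1 ≤ ℓ₀ → ℓ₀ ≤ ℓ → ∃ j, ¬ (p j ^ ν j ∣ ℓ₀) := fun ℓ₀ h1 h2 ↦
    exists_not_prime_pow_dvd_of_lt_prod hp hpinj h1 (h2.trans_lt hℓ)
  refine ⟨hnot_dvd, fun ℓ₀ hℓ₀ t ht htiff ↦ ?_⟩
  subst hm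
  rw [ZMod.natCast_eq_zero_iff, prod_dvd_sum_div_mul_iff hp hpinj hα]
  constructor
  · intro hdvd
    by_contra hne
    obtain ⟨j, hj⟩ := hnot_dvd ℓ₀ (Nat.one_le_iff_ne_zero.2 hne) hℓ₀
    have htj : t j = 1 := by have := ht j; have := (htiff j).not.2 hj; omega
    exact (hp j).not_dvd_one (htj ▸ hdvd j)
  · rintro rfl j
    simp [(htiff j).2 (dvd_zero _)]

/-- Key arithmetic lemma: with `m = p₁^{α₁}⋯p_ω^{α_ω}` (`ω ≥ 2` distinct primes)
and `ℓ < p₁^{ν₁}⋯p_ω^{ν_ω}`: (1) every `1 ≤ ℓ₀ ≤ ℓ` fails divisibility by some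
`pⱼ^{νⱼ}`; (2) for 0/1-valued `t` with `tⱼ = 0 ↔ pⱼ^{νⱼ} ∣ ℓ₀`, the sum
`Σⱼ (m/pⱼ)·tⱼ` vanishes mod `m` iff `ℓ₀ = 0`. -/
theorem stmt_12 (ω : ℕ) (hω : 2 ≤ ω) (p α ν : Fin ω → ℕ)
    (hp : ∀ j, (p j).Prime) (hpinj : Function.Injective p)
    (hα : ∀ j, 1 ≤ α j) (m : ℕ) (hm : m = ∏ j, p j ^ α j)
    (ℓ : ℕ) (hℓ : ℓ < ∏ j, p j ^ ν j) :
    (∀ ℓ₀ : ℕ, 1 ≤ ℓ₀ → ℓ₀ ≤ ℓ → ∃ j, ¬ (p j ^ ν j ∣ ℓ₀)) ∧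
    (∀ ℓ₀ : ℕ, ℓ₀ ≤ ℓ → ∀ t : Fin ω → ℕ, (∀ j, t j ≤ 1) →
      (∀ j, t j = 0 ↔ p j ^ ν j ∣ ℓ₀) →
      (((∑ j, (m / p j) * t j : ℕ) : ZMod m) = 0 ↔ ℓ₀ = 0)) :=
  stmt_12_general ω p α ν hp hpinj hα m hm ℓ hℓ
end

section
/- Let m have ω ≥ 2 distinct prime divisors p₁ > … > p_ω, and let Z₁,…,Z_s be index sets with |Zⱼ| < pⱼ for each j ≤ s, where p₁,…,p_s ≥ ω. Suppose sᵢⱼ ∈ {0,1} for j ≤ s and i ∈ Zⱼ, and let σ = Σ_{j≤s} (m/pⱼ)·|Zⱼ| mod m. Then Σ_{j≤s} Σ_{i∈Zⱼ} (m/pⱼ)·sᵢⱼ ≡ σ (mod m) if and only if sᵢⱼ = 1 for all j ≤ s and all i ∈ Zⱼ. -/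
/-!
Write `dⱼ = |Zⱼ| - Σ_{i∈Zⱼ} sᵢⱼ`, so `0 ≤ dⱼ < pⱼ` and the congruence says `m ∣ Σⱼ (m/pⱼ)·dⱼ`.
Fix `j` and let `pⱼ^a` be the exact power of `pⱼ` in `m`. Every other summand is divisible by
`pⱼ^a`, hence so is `(m/pⱼ)·dⱼ`; as `m/pⱼ` carries only `pⱼ^(a-1)`, this forces `pⱼ ∣ dⱼ`, so
`dⱼ = 0`.
-/

open Finset

namespace Nat

theorem prime_dvd_of_ordProj_dvd_div_mul {P m d : ℕ} (hP : P.Prime) (hm : m ≠ 0) (hPm : P ∣ m)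
    (h : ordProj[P] m ∣ m / P * d) : P ∣ d := by
  have hexpand : m / P * d * P = ordProj[P] m * (ordCompl[P] m * d) := by
    rw [mul_right_comm, Nat.div_mul_cancel hPm, ← mul_assoc, ordProj_mul_ordCompl_eq_self]
  have hmul : ordProj[P] m * P ∣ ordProj[P] m * (ordCompl[P] m * d) :=
    hexpand ▸ mul_dvd_mul_right h P
  have hcompl : P ∣ ordCompl[P] m * d :=
    Nat.dvd_of_mul_dvd_mul_left (pow_pos hP.pos _) hmul
  exact (coprime_ordCompl hP hm).dvd_of_dvd_mul_left hcompl

variable {ι : Type*} {S : Finset ι} {m : ℕ} {q : ι → ℕ}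

theorem dvd_of_dvd_sum_div_mul (hq : ∀ j ∈ S, (q j).Prime) (hinj : Set.InjOn q S)
    (hm : m ≠ 0) (hqm : ∀ j ∈ S, q j ∣ m) {d : ι → ℕ} (h : m ∣ ∑ k ∈ S, m / q k * d k)
    {j : ι} (hj : j ∈ S) : q j ∣ d j := by
  classical
  have hproj_others : ordProj[q j] m ∣ ∑ k ∈ S.erase j, m / q k * d k := by
    refine dvd_sum fun k hk => Dvd.dvd.mul_right ?_ _
    obtain ⟨hkj, hkS⟩ := mem_erase.mp hk
    have hcop : Coprime (ordProj[q j] m) (q k) :=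
      Coprime.pow_left _ <| (coprime_primes (hq j hj) (hq k hkS)).mpr fun h' =>
        hkj (hinj hkS hj h'.symm)
    refine hcop.dvd_of_dvd_mul_left ?_
    rw [Nat.mul_div_cancel' (hqm k hkS)]
    exact ordProj_dvd m (q j)
  have hproj_sum : ordProj[q j] m ∣ ∑ k ∈ S, m / q k * d k :=
    (ordProj_dvd m (q j)).trans h
  rw [← add_sum_erase S _ hj] at hproj_sum
  exact prime_dvd_of_ordProj_dvd_div_mul (hq j hj) hm (hqm j hj)
    ((Nat.dvd_add_left hproj_others).mp hproj_sum)

theorem eq_of_sum_div_mul_modEq (hq : ∀ j ∈ S, (q j).Prime) (hinj : Set.InjOn q S)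
    (hm : m ≠ 0) (hqm : ∀ j ∈ S, q j ∣ m) {a c : ι → ℕ} (hac : ∀ j ∈ S, a j ≤ c j)
    (hc : ∀ j ∈ S, c j < q j)
    (h : ∑ j ∈ S, m / q j * a j ≡ ∑ j ∈ S, m / q j * c j [MOD m]) :
    ∀ j ∈ S, a j = c j := by
  have hle : ∀ j ∈ S, m / q j * a j ≤ m / q j * c j := fun j hj =>
    Nat.mul_le_mul_left _ (hac j hj)
  rw [modEq_iff_dvd' (sum_le_sum hle), ← sum_tsub_distrib S hle] at h
  simp_rw [← Nat.mul_sub] at h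
  intro j hj
  have hdiff : c j - a j = 0 :=
    eq_zero_of_dvd_of_lt (dvd_of_dvd_sum_div_mul hq hinj hm hqm h hj)
      ((Nat.sub_le _ _).trans_lt (hc j hj))
  have := hac j hj
  omega

end Nat

theorem stmt_13_general (ω s : ℕ) (hs : s ≤ ω) (p α : Fin ω → ℕ)
    (hp : ∀ j, (p j).Prime) (hdec : StrictAnti p) (hα : ∀ j, 1 ≤ α j)
    (m : ℕ) (hm : m = ∏ j, p j ^ α j)
    (Z : Fin s → Finset ℕ) (hZ : ∀ j, (Z j).card < p (Fin.castLE hs j))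
    (t : Fin s → ℕ → ℕ) (ht : ∀ j, ∀ i ∈ Z j, t j i ≤ 1) :
    (((∑ j : Fin s, ∑ i ∈ Z j, (m / p (Fin.castLE hs j)) * t j i : ℕ) : ZMod m)
        = ((∑ j : Fin s, (m / p (Fin.castLE hs j)) * (Z j).card : ℕ) : ZMod m))
      ↔ ∀ j, ∀ i ∈ Z j, t j i = 1 := by
  have hm0 : m ≠ 0 := hm ▸ prod_ne_zero_iff.mpr fun j _ => pow_ne_zero _ (hp j).ne_zero
  have hpm : ∀ j, p j ∣ m := fun j => hm ▸
    (dvd_pow_self _ (Nat.one_le_iff_ne_zero.mp (hα j))).trans (dvd_prod_of_mem _ (mem_univ j))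
  simp_rw [← mul_sum, ZMod.natCast_eq_natCast_iff, card_eq_sum_ones]
  constructor
  · intro h j
    refine (sum_eq_sum_iff_of_le (ht j)).mp ?_
    exact Nat.eq_of_sum_div_mul_modEq (fun j _ => hp _)
      ((hdec.injective.comp (Fin.castLE_injective hs)).injOn) hm0 (fun j _ => hpm _)
      (fun j _ => sum_le_sum (ht j)) (fun j _ => (card_eq_sum_ones (Z j)) ▸ hZ j) h j (mem_univ j)
  · intro h
    simp_rw [sum_congr rfl (h _)]
    rfl

/-- Let `m = p₁^{α₁}⋯p_ω^{α_ω}` with `ω ≥ 2` distinct primes `p₁ > … > p_ω`,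
let `Z₁,…,Z_s` be index sets with `|Zⱼ| < pⱼ` and `pⱼ ≥ ω` for `j ≤ s`, and let
`sᵢⱼ ∈ {0,1}`. With `σ = Σ_{j≤s} (m/pⱼ)·|Zⱼ|`, we have
`Σ_{j≤s} Σ_{i∈Zⱼ} (m/pⱼ)·sᵢⱼ ≡ σ (mod m)` iff all `sᵢⱼ = 1`. -/
theorem stmt_13 (ω s : ℕ) (hω : 2 ≤ ω) (hs : s ≤ ω) (p α : Fin ω → ℕ)
    (hp : ∀ j, (p j).Prime) (hdec : StrictAnti p) (hα : ∀ j, 1 ≤ α j)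
    (m : ℕ) (hm : m = ∏ j, p j ^ α j)
    (hbig : ∀ j : Fin s, ω ≤ p (Fin.castLE hs j))
    (Z : Fin s → Finset ℕ) (hZ : ∀ j, (Z j).card < p (Fin.castLE hs j))
    (t : Fin s → ℕ → ℕ) (ht : ∀ j, ∀ i ∈ Z j, t j i ≤ 1) :
    (((∑ j : Fin s, ∑ i ∈ Z j, (m / p (Fin.castLE hs j)) * t j i : ℕ) : ZMod m)
        = ((∑ j : Fin s, (m / p (Fin.castLE hs j)) * (Z j).card : ℕ) : ZMod m))
      ↔ ∀ j, ∀ i ∈ Z j, t j i = 1 :=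
  stmt_13_general ω s hs p α hp hdec hα m hm Z hZ t ht
end

section
/- Let γ : ℕ → ℕ be increasing, and suppose every nonconstant boolean function computable by a circuit of size s in a given class, when restricted to a spike by fixing at most log₂|S(f)| variables, still requires size γ(n − log₂|S(f)|) ≤ s where n is the arity. Then for any nonconstant n-ary f computable by a circuit of size s, |f⁻¹(1)| ≥ |S(f)| ≥ 2^{n − γ⁻¹(s)}; equivalently bal(f) ≥ 2^{1 − γ⁻¹(s)}. -/
/-!
The hypothesis says `γ (n - log₂ |S(f)|) ≤ s`, so `n - log₂ |S(f)| ≤ γ⁻¹(s)` (the supremum is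
a genuine one, since `r ≤ γ r` bounds `{r | γ r ≤ s}` by `s`), i.e.
`n - γ⁻¹(s) ≤ log₂ |S(f)|`, and `2 ^ log₂ |S(f)| ≤ |S(f)|` as soon as `S(f)` is nonempty,
which is what nonconstancy guarantees. The balance bound is the same inequality rewritten
through `1 - |c₁ - c₀| / 2ⁿ = 2 min(c₁, c₀) / 2ⁿ` for `c₁ + c₀ = 2ⁿ`.
-/

open Finset

section Piles

variable {α : Type*} [Fintype α] (f : α → Bool)

theorem card_filter_true_add_card_filter_false :
    #{x | f x = true} + #{x | f x = false} = Fintype.card α := by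
  simpa only [Bool.not_eq_true, card_univ] using
    Finset.card_filter_add_card_filter_not (s := univ) (fun x => f x = true)

theorem filter_nonempty_of_ne {x y : α} (hxy : f x ≠ f y) (b : Bool) :
    ({x | f x = b} : Finset α).Nonempty := by
  by_cases hx : f x = b
  · exact ⟨x, by simpa using hx⟩
  · exact ⟨y, by simp only [mem_filter, mem_univ, true_and]; cases b <;> simp_all⟩

theorem min_card_filter_pos_of_ne {x y : α} (hxy : f x ≠ f y) :
    0 < min #{x | f x = true} #{x | f x = false} :=
  lt_min (filter_nonempty_of_ne f hxy true).card_pos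
    (filter_nonempty_of_ne f hxy false).card_pos

end Piles

theorem le_sSup_of_strictMono {γ : ℕ → ℕ} (hγ : StrictMono γ) {r s : ℕ} (h : γ r ≤ s) :
    r ≤ sSup {r | γ r ≤ s} :=
  le_csSup ⟨s, fun _ hr => hγ.le_apply.trans hr⟩ h

theorem pow_sub_le_of_sub_log_le {m n k : ℕ} (hm : m ≠ 0) (h : n - Nat.log 2 m ≤ k) :
    2 ^ (n - k) ≤ m :=
  calc 2 ^ (n - k) ≤ 2 ^ Nat.log 2 m := Nat.pow_le_pow_right two_pos (by omega)
    _ ≤ m := Nat.pow_log_le_self 2 hm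

theorem one_sub_abs_sub_div_eq {c₁ c₀ N : ℚ} (hsum : c₁ + c₀ = N) (hN : N ≠ 0) :
    1 - |c₁ - c₀| / N = 2 * min c₁ c₀ / N := by
  rw [eq_div_iff hN, sub_mul, div_mul_cancel₀ _ hN, ← hsum]
  rcases le_total c₁ c₀ with h | h
  · rw [abs_of_nonpos (by linarith), min_eq_left h]; ring
  · rw [abs_of_nonneg (by linarith), min_eq_right h]; ring

theorem two_zpow_one_sub_le {n k : ℕ} {m : ℚ} (h : (2 : ℚ) ^ (n - k) ≤ m) :
    (2 : ℚ) ^ (1 - (k : ℤ)) ≤ 2 * m / 2 ^ n := by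
  rw [le_div_iff₀ (by positivity), ← zpow_natCast (2 : ℚ) n,
    ← zpow_add₀ two_ne_zero]
  calc (2 : ℚ) ^ (1 - (k : ℤ) + n) ≤ 2 ^ (((n - k + 1 : ℕ)) : ℤ) :=
        zpow_le_zpow_right₀ one_le_two (by omega)
    _ = 2 * 2 ^ (n - k) := by rw [zpow_natCast, pow_succ, mul_comm]
    _ ≤ 2 * m := by linarith

/-- If spikes of arity `r` require circuits of size `≥ γ(r)` (γ increasing), so
that a nonconstant `f` computable in size `s` satisfies
`γ(n − log₂|S(f)|) ≤ s`, then `|f⁻¹(1)| ≥ |S(f)| ≥ 2^{n − γ⁻¹(s)}`;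
equivalently `bal(f) ≥ 2^{1 − γ⁻¹(s)}`. -/
theorem stmt_17 (γ : ℕ → ℕ) (hγ : StrictMono γ) (γinv : ℕ → ℕ)
    (hγinv : ∀ s, γinv s = sSup {r | γ r ≤ s})
    (n s : ℕ) (f : (Fin n → Bool) → Bool) (hnc : ∃ x y, f x ≠ f y)
    (hspike : γ (n - Nat.log 2
        (min (Finset.univ.filter fun x : Fin n → Bool => f x = true).card
             (Finset.univ.filter fun x : Fin n → Bool => f x = false).card)) ≤ s) :
    2 ^ (n - γinv s)
        ≤ min (Finset.univ.filter fun x : Fin n → Bool => f x = true).card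
              (Finset.univ.filter fun x : Fin n → Bool => f x = false).card ∧
    min (Finset.univ.filter fun x : Fin n → Bool => f x = true).card
        (Finset.univ.filter fun x : Fin n → Bool => f x = false).card
      ≤ (Finset.univ.filter fun x : Fin n → Bool => f x = true).card ∧
    (2 : ℚ) ^ (1 - (γinv s : ℤ))
      ≤ 1 - |((Finset.univ.filter fun x : Fin n → Bool => f x = true).card : ℚ)
              - ((Finset.univ.filter fun x : Fin n → Bool => f x = false).card : ℚ)|
            / 2 ^ n := by
  obtain ⟨x, y, hxy⟩ := hnc
  have hS : 2 ^ (n - γinv s) ≤ min #{x | f x = true} #{x | f x = false} :=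
    pow_sub_le_of_sub_log_le (min_card_filter_pos_of_ne f hxy).ne'
      (hγinv s ▸ le_sSup_of_strictMono hγ hspike)
  have hsum : (#{x | f x = true} : ℚ) + #{x | f x = false} = 2 ^ n := by
    exact_mod_cast (card_filter_true_add_card_filter_false f).trans (by simp)
  refine ⟨hS, min_le_left _ _, ?_⟩
  rw [one_sub_abs_sub_div_eq hsum (by positivity), ← Nat.cast_min]
  exact two_zpow_one_sub_le (by exact_mod_cast hS)
end
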